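/- For each 𝔟-scale S ⊆ [ℕ]^∞, the subspace S ∪ Fin of the Cantor space 𝒫(ℕ) is Hurewicz. -/

import Mathlib

open Set Filter Cardinal

namespace OmissionOfIntervals

/-- The Cantor space `𝒫(ℕ)`, identified with `ℕ → Bool` via characteristic functions,
with the product topology. -/
abbrev CantorSp : Type := ℕ → Bool

/-- `Fin`: the points of the Cantor space coding finite subsets of `ℕ`. -/
def CFin : Set CantorSp := {x | {n | x n = true}.Finite}

/-- `[ℕ]^∞`: the points of the Cantor space coding infinite subsets of `ℕ`. -/
def CInf : Set CantorSp := {x | {n | x n = true}.Infinite}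

/-- Increasing enumeration of the subset of `ℕ` coded by `x`. -/
noncomputable def enum (x : CantorSp) : ℕ → ℕ := Nat.nth (fun n => x n = true)

/-- `f ≤* g`: `f n ≤ g n` for all but finitely many `n`. -/
def LeStar (f g : ℕ → ℕ) : Prop := ∀ᶠ n in atTop, f n ≤ g n

/-- `a ⊆* b`: the set coded by `a` is almost contained in the set coded by `b`. -/
def SubStar (a b : CantorSp) : Prop := {n | a n = true ∧ ¬ b n = true}.Finite

/-- A dominating family in the Baire space. -/
def Dominating (S : Set (ℕ → ℕ)) : Prop := ∀ f : ℕ → ℕ, ∃ s ∈ S, LeStar f s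

/-- An unbounded (with respect to `≤*`) family in the Baire space. -/
def UnboundedFam (S : Set (ℕ → ℕ)) : Prop := ¬ ∃ g : ℕ → ℕ, ∀ s ∈ S, LeStar s g

/-- The dominating number `𝔡`. -/
noncomputable def frd : Cardinal := sInf {c | ∃ S : Set (ℕ → ℕ), Dominating S ∧ #S = c}

/-- The bounding number `𝔟`. -/
noncomputable def frb : Cardinal := sInf {c | ∃ S : Set (ℕ → ℕ), UnboundedFam S ∧ #S = c}

/-- A centered family of infinite subsets of `ℕ`: every finite subfamily has infinite
intersection. -/
def Centered (S : Set CantorSp) : Prop :=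
  S ⊆ CInf ∧ ∀ F : Finset CantorSp, ↑F ⊆ S → {n | ∀ x ∈ F, x n = true}.Infinite

/-- `S` has a pseudointersection: an infinite set almost contained in every member of `S`. -/
def HasPseudointersection (S : Set CantorSp) : Prop := ∃ a ∈ CInf, ∀ s ∈ S, SubStar a s

/-- The pseudointersection number `𝔭`. -/
noncomputable def frp : Cardinal :=
  sInf {c | ∃ S : Set CantorSp, Centered S ∧ ¬ HasPseudointersection S ∧ #S = c}

/-- `S ⊆ [ℕ]^∞` is `κ`-unbounded: `|S| ≥ κ` and for every `b : ℕ → ℕ` only `< κ` many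
members of `S` satisfy `s(n) ≤ b(n)` for all `n` (via increasing enumerations). -/
def KappaUnbounded (κ : Cardinal) (S : Set CantorSp) : Prop :=
  κ ≤ #S ∧ ∀ b : ℕ → ℕ, #{s ∈ S | ∀ n, enum s n ≤ b n} < κ

/-- `X` is `κ`-concentrated on `CFin`: `|X| ≥ κ` and `|X ∖ U| < κ` for every open
`U ⊇ CFin`. -/
def KappaConcentrated (κ : Cardinal) (X : Set CantorSp) : Prop :=
  κ ≤ #X ∧ ∀ U : Set CantorSp, IsOpen U → CFin ⊆ U → #(X \ U : Set CantorSp) < κ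

/-- An open cover of the space `X`. -/
def IsOpenCover {X : Type*} [TopologicalSpace X] (𝒰 : Set (Set X)) : Prop :=
  (∀ U ∈ 𝒰, IsOpen U) ∧ ⋃₀ 𝒰 = Set.univ

/-- A point-cofinite (γ-) open cover of the space `X`: an infinite family of open sets such
that every point belongs to all but finitely many members. -/
def PointCofiniteCover {X : Type*} [TopologicalSpace X] (𝒰 : Set (Set X)) : Prop :=
  (∀ U ∈ 𝒰, IsOpen U) ∧ 𝒰.Infinite ∧ ∀ x : X, {U ∈ 𝒰 | x ∉ U}.Finite

/-- An ω-cover of the space `X`: no member contains all of `X`, and every finite subset of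
`X` is contained in some member. -/
def OmegaCover {X : Type*} [TopologicalSpace X] (𝒰 : Set (Set X)) : Prop :=
  (∀ U ∈ 𝒰, IsOpen U) ∧ (∀ U ∈ 𝒰, U ≠ Set.univ) ∧ ∀ F : Finset X, ∃ U ∈ 𝒰, ↑F ⊆ U

/-- An ω-cover of the subset `Y` by open subsets of the ambient space `X`. -/
def OmegaCoverOf {X : Type*} [TopologicalSpace X] (𝒰 : Set (Set X)) (Y : Set X) : Prop :=
  (∀ U ∈ 𝒰, IsOpen U) ∧ (∀ U ∈ 𝒰, ¬ Y ⊆ U) ∧ ∀ F : Finset X, ↑F ⊆ Y → ∃ U ∈ 𝒰, ↑F ⊆ U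

/-- The Menger property. -/
def Menger (X : Type*) [TopologicalSpace X] : Prop :=
  ∀ 𝒰 : ℕ → Set (Set X), (∀ n, IsOpenCover (𝒰 n)) →
    ∃ 𝓕 : ℕ → Set (Set X), (∀ n, 𝓕 n ⊆ 𝒰 n ∧ (𝓕 n).Finite) ∧ ⋃₀ (⋃ n, 𝓕 n) = Set.univ

/-- The Hurewicz property. -/
def Hurewicz (X : Type*) [TopologicalSpace X] : Prop :=
  ∀ 𝒰 : ℕ → Set (Set X), (∀ n, IsOpenCover (𝒰 n)) →
    (∀ n, ¬ ∃ 𝓕 ⊆ 𝒰 n, 𝓕.Finite ∧ ⋃₀ 𝓕 = Set.univ) →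
    ∃ 𝓕 : ℕ → Set (Set X), (∀ n, 𝓕 n ⊆ 𝒰 n ∧ (𝓕 n).Finite) ∧
      ∀ x : X, ∀ᶠ n in atTop, x ∈ ⋃₀ 𝓕 n

/-- The property `S1(Γ,Γ)`. -/
def S1GammaGamma (X : Type*) [TopologicalSpace X] : Prop :=
  ∀ 𝒰 : ℕ → Set (Set X), (∀ n, PointCofiniteCover (𝒰 n)) →
    ∃ U : ℕ → Set X, (∀ n, U n ∈ 𝒰 n) ∧ ∀ x : X, ∀ᶠ n in atTop, x ∈ U n

/-- The property `S1(Γ,O)`. -/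
def S1GammaO (X : Type*) [TopologicalSpace X] : Prop :=
  ∀ 𝒰 : ℕ → Set (Set X), (∀ n, PointCofiniteCover (𝒰 n)) →
    ∃ U : ℕ → Set X, (∀ n, U n ∈ 𝒰 n) ∧ (⋃ n, U n) = Set.univ

/-- The property `S1(Ω,Γ)`. -/
def S1OmegaGamma (X : Type*) [TopologicalSpace X] : Prop :=
  ∀ 𝒰 : ℕ → Set (Set X), (∀ n, OmegaCover (𝒰 n)) →
    ∃ U : ℕ → Set X, (∀ n, U n ∈ 𝒰 n) ∧ ∀ x : X, ∀ᶠ n in atTop, x ∈ U n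

/-- `X` is an ω-γ set: every open ω-cover has a subfamily that is a point-cofinite cover. -/
def OmegaGammaSet (X : Type*) [TopologicalSpace X] : Prop :=
  ∀ 𝒰 : Set (Set X), OmegaCover 𝒰 → ∃ 𝒱 ⊆ 𝒰, PointCofiniteCover 𝒱

/-- The property `U_k(Γ,Γ)`. -/
def UkGammaGamma (k : ℕ) (X : Type*) [TopologicalSpace X] : Prop :=
  ∀ 𝒰 : ℕ → Set (Set X), (∀ n, PointCofiniteCover (𝒰 n)) →
    (∀ n, ¬ ∃ 𝓕 : Finset (Set X), ↑𝓕 ⊆ 𝒰 n ∧ 𝓕.card ≤ k ∧ ⋃₀ (↑𝓕 : Set (Set X)) = Set.univ) →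
    ∃ 𝓕 : ℕ → Finset (Set X), (∀ n, ↑(𝓕 n) ⊆ 𝒰 n ∧ (𝓕 n).card ≤ k) ∧
      ∀ x : X, ∀ᶠ n in atTop, x ∈ ⋃₀ ((𝓕 n : Finset (Set X)) : Set (Set X))

/-- The property `U_id(Γ,Γ)`. -/
def UidGammaGamma (X : Type*) [TopologicalSpace X] : Prop :=
  ∀ 𝒰 : ℕ → Set (Set X), (∀ n, PointCofiniteCover (𝒰 n)) →
    (∀ n, ¬ ∃ 𝓕 : Finset (Set X), ↑𝓕 ⊆ 𝒰 n ∧ ⋃₀ (↑𝓕 : Set (Set X)) = Set.univ) →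
    ∃ 𝓕 : ℕ → Finset (Set X), (∀ n, ↑(𝓕 n) ⊆ 𝒰 n ∧ (𝓕 n).card ≤ n) ∧
      ∀ x : X, ∀ᶠ n in atTop, x ∈ ⋃₀ ((𝓕 n : Finset (Set X)) : Set (Set X))

/-- The set of terms of an ordinal-indexed sequence, below the ordinal `o`. -/
def rangeBelow (s : Ordinal → CantorSp) (o : Ordinal) : Set CantorSp := {x | ∃ α < o, x = s α}

/-- `s`, restricted to ordinals below `frb.ord`, is a `𝔟`-scale: an unbounded,
`≤*`-increasing `𝔟`-sequence of infinite subsets of `ℕ`. -/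
def IsBScale (s : Ordinal → CantorSp) : Prop :=
  (∀ α < frb.ord, s α ∈ CInf) ∧
  UnboundedFam {f | ∃ α < frb.ord, f = enum (s α)} ∧
  ∀ α β : Ordinal, α < β → β < frb.ord → LeStar (enum (s α)) (enum (s β))

/-- `t`, restricted to ordinals below `κ.ord`, is a `κ`-tower:
`⊆*`-decreasing sequence of infinite subsets of `ℕ`. -/
def IsTower (κ : Cardinal) (t : Ordinal → CantorSp) : Prop :=
  (∀ α < κ.ord, t α ∈ CInf) ∧
  ∀ α β : Ordinal, α < β → β < κ.ord → SubStar (t β) (t α)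

/-- An unbounded `κ`-tower. -/
def IsUnboundedTower (κ : Cardinal) (t : Ordinal → CantorSp) : Prop :=
  IsTower κ t ∧ UnboundedFam {f | ∃ α < κ.ord, f = enum (t α)}

/-- `a ⊑ b`: for all but finitely many `n`, the interval `[b(n), b(n+1)]` contains at least
two elements of the set coded by `a`. -/
def SqSubset (a b : CantorSp) : Prop :=
  ∀ᶠ n in atTop,
    2 ≤ ((Finset.Icc (enum b n) (enum b (n + 1))).filter (fun k => a k = true)).card

/-- `s`, restricted to ordinals below `frb.ord`, is a `𝔟(⊑)`-scale. -/
def IsBSqScale (s : Ordinal → CantorSp) : Prop :=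
  (∀ α < frb.ord, s α ∈ CInf) ∧
  UnboundedFam {f | ∃ α < frb.ord, f = enum (s α)} ∧
  ∀ α β : Ordinal, α < β → β < frb.ord → SqSubset (s α) (s β)

/-!
Enumerate each cover as `W n 0, W n 1, …`; it suffices to find `b : ℕ → ℕ` such that every point
lies in some `W n k` with `k ≤ b n` for all large `n`. Since every finite set belongs to the space,
for each `t` the finitely many patterns on `[0, t]` are covered by boundedly many `W n k`, and by
openness this persists for every point vanishing on `(t, R n t)`. Iterating `R` gives intervals
`(p t, p (t + 1))`, and a set whose `j`-th element exceeds `p (2j + 1)` misses one of the `j + 1`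
intervals with `t ∈ [j, 2j]`. By unboundedness some `s δ` exceeds `j ↦ p (2j + 1)` infinitely
often, and the scale being `≤*`-increasing, every later `s α` eventually does so at the same
places. The remaining points, `Fin` and the `s β` with `β < δ`, are fewer than `𝔟`, hence bounded.
-/

lemma exists_leStar_bound_of_countable {S : Set (ℕ → ℕ)} (hS : S.Countable) :
    ∃ g : ℕ → ℕ, ∀ f ∈ S, LeStar f g := by
  obtain rfl | hne := S.eq_empty_or_nonempty
  · exact ⟨id, by simp⟩
  obtain ⟨e, rfl⟩ := hS.exists_eq_range hne
  refine ⟨fun n => (Finset.range (n + 1)).sup (e · n), ?_⟩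
  rintro _ ⟨i, rfl⟩
  filter_upwards [eventually_ge_atTop i] with n hn
  exact Finset.le_sup (f := (e · n)) (Finset.mem_range_succ_iff.2 hn)

lemma aleph0_lt_mk_of_unboundedFam {S : Set (ℕ → ℕ)} (h : UnboundedFam S) : ℵ₀ < #S := by
  by_contra! hS
  exact h (exists_leStar_bound_of_countable (Set.countable_coe_iff.1 (mk_le_aleph0_iff.1 hS)))

lemma unboundedFam_univ : UnboundedFam univ := fun ⟨g, hg⟩ => by
  obtain ⟨n, hn⟩ := (hg (g · + 1) trivial).exists
  exact (Nat.lt_succ_self (g n)).not_ge hn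

lemma aleph0_lt_frb : ℵ₀ < frb := by
  obtain ⟨S, hS, hSb⟩ : frb ∈ {c | ∃ S : Set (ℕ → ℕ), UnboundedFam S ∧ #S = c} :=
    csInf_mem ⟨_, univ, unboundedFam_univ, rfl⟩
  exact hSb ▸ aleph0_lt_mk_of_unboundedFam hS

lemma exists_leStar_bound_of_mk_lt_frb {S : Set (ℕ → ℕ)} (hS : #S < frb) :
    ∃ g : ℕ → ℕ, ∀ f ∈ S, LeStar f g := by
  by_contra h
  exact (csInf_le' ⟨S, h, rfl⟩ : frb ≤ #S).not_gt hS

lemma cfin_countable : CFin.Countable := by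
  refine (Set.countable_range fun q : Finset ℕ => fun i => decide (i ∈ q)).mono
    fun x (hx : {n | x n = true}.Finite) => ?_
  exact ⟨hx.toFinset, funext fun i => by cases h : x i <;> simp [h]⟩

lemma mk_rangeBelow_le (s : Ordinal.{0} → CantorSp) (o : Ordinal.{0}) :
    #(rangeBelow s o) ≤ o.card := by
  have : rangeBelow s o = s '' Iio o := by ext; simp [rangeBelow, eq_comm]
  rw [this, ← Cardinal.lift_le.{1}]
  simpa using mk_image_le_lift (f := s) (s := Iio o)

lemma mk_cfin_union_rangeBelow_lt_frb (s : Ordinal.{0} → CantorSp) {o : Ordinal.{0}}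
    (ho : o < frb.ord) : #(CFin ∪ rangeBelow s o : Set CantorSp) < frb :=
  (mk_union_le _ _).trans_lt <| add_lt_of_lt aleph0_lt_frb.le
    ((mk_le_aleph0_iff.2 cfin_countable.to_subtype).trans_lt aleph0_lt_frb)
    ((mk_rangeBelow_le s o).trans_lt (lt_ord.1 ho))

lemma exists_cover_bound_of_mk_lt_frb {X : Type} {W : ℕ → ℕ → Set X}
    (hW : ∀ n x, ∃ k, x ∈ W n k) {Y : Set X} (hY : #Y < frb) :
    ∃ b : ℕ → ℕ, ∀ x ∈ Y, ∀ᶠ n in atTop, ∃ k ≤ b n, x ∈ W n k := by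
  choose f hf using hW
  obtain ⟨b, hb⟩ := exists_leStar_bound_of_mk_lt_frb (S := (fun x n => f n x) '' Y)
    (mk_image_le.trans_lt hY)
  exact ⟨b, fun x hx => (hb _ (mem_image_of_mem _ hx)).mono fun n hn => ⟨f n x, hn, hf n x⟩⟩

lemma exists_seq_of_isOpenCover {X : Type*} [TopologicalSpace X] [SecondCountableTopology X]
    [Nonempty X] {𝒰 : Set (Set X)} (h𝒰 : IsOpenCover 𝒰) :
    ∃ W : ℕ → Set X, (∀ k, W k ∈ 𝒰) ∧ ∀ x, ∃ k, x ∈ W k := by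
  obtain ⟨T, hTc, hT𝒰, hTU⟩ := TopologicalSpace.isOpen_sUnion_countable 𝒰 h𝒰.1
  rw [h𝒰.2] at hTU
  have hTne : T.Nonempty := by
    by_contra hT
    simp [not_nonempty_iff_eq_empty.1 hT, eq_comm (a := (∅ : Set X))] at hTU
  obtain ⟨W, rfl⟩ := hTc.exists_eq_range hTne
  refine ⟨W, fun k => hT𝒰 (mem_range_self k), fun x => ?_⟩
  simpa using (hTU ▸ mem_univ x : x ∈ ⋃₀ range W)

lemma hurewicz_of_forall_exists_bound {X : Type*} [TopologicalSpace X]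
    [SecondCountableTopology X] [Nonempty X]
    (h : ∀ W : ℕ → ℕ → Set X, (∀ n k, IsOpen (W n k)) → (∀ n x, ∃ k, x ∈ W n k) →
      ∃ b : ℕ → ℕ, ∀ x, ∀ᶠ n in atTop, ∃ k ≤ b n, x ∈ W n k) :
    Hurewicz X := by
  intro 𝒰 h𝒰 _
  choose W hW𝒰 hWcov using fun n => exists_seq_of_isOpenCover (h𝒰 n)
  obtain ⟨b, hb⟩ := h W (fun n k => (h𝒰 n).1 _ (hW𝒰 n k)) hWcov
  refine ⟨fun n => W n '' Iic (b n), fun n => ⟨?_, (finite_Iic _).image _⟩, fun x => ?_⟩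
  · rintro _ ⟨k, -, rfl⟩
    exact hW𝒰 n k
  · filter_upwards [hb x] with n ⟨k, hk, hxk⟩
    exact ⟨W n k, mem_image_of_mem _ hk, hxk⟩

lemma exists_cylinder_subset {E : ℕ → Type*} [∀ n, TopologicalSpace (E n)]
    [∀ n, DiscreteTopology (E n)] {V : Set (∀ n, E n)} (hV : IsOpen V) {x : ∀ n, E n}
    (hx : x ∈ V) : ∃ r, PiNat.cylinder x r ⊆ V := by
  obtain ⟨_, ⟨y, r, rfl⟩, hxy, hyV⟩ :=
    (PiNat.isTopologicalBasis_cylinders E).exists_subset_of_mem_open hx hV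
  exact ⟨r, PiNat.mem_cylinder_iff_eq.1 hxy ▸ hyV⟩

lemma exists_cover_bound_of_eq_false_on_Ioo {X : Set CantorSp} (hX : CFin ⊆ X) {W : ℕ → Set X}
    (hW : ∀ k, IsOpen (W k)) (hcov : ∀ x, ∃ k, x ∈ W k) (t : ℕ) :
    ∃ M R : ℕ, ∀ x : X, (∀ i ∈ Ioo t R, (x : CantorSp) i = false) → ∃ k ≤ M, x ∈ W k := by
  classical
  let χ : Finset ℕ → CantorSp := fun q i => decide (i ∈ q)
  have hχX : ∀ q, χ q ∈ X := fun q => hX (q.finite_toSet.subset fun i => by simp [χ])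
  choose k hk using fun q => hcov ⟨χ q, hχX q⟩
  choose V hV hVW using fun q => isOpen_induced_iff.1 (hW (k q))
  choose r hr using fun q =>
    exists_cylinder_subset (hV q) (x := χ q) (by simpa [← hVW q] using hk q)
  let P := (Finset.range (t + 1)).powerset
  refine ⟨P.sup k, P.sup r, fun x hx => ?_⟩
  let q := (Finset.range (t + 1)).filter fun i => (x : CantorSp) i = true
  have hqP : q ∈ P := Finset.mem_powerset.2 (Finset.filter_subset _ _)
  refine ⟨k q, Finset.le_sup hqP, ?_⟩
  rw [← hVW q]
  refine hr q (PiNat.mem_cylinder_iff.2 fun i hi => ?_)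
  by_cases hit : i ≤ t
  · simp [χ, q, Nat.lt_succ_of_le hit]
  · simp [χ, q, hx i ⟨by omega, hi.trans_le (Finset.le_sup hqP)⟩]

lemma exists_strictMono_forall_le (R : ℕ → ℕ → ℕ) :
    ∃ p : ℕ → ℕ, StrictMono p ∧ ∀ n t, n ≤ p t → R n (p t) ≤ p (t + 1) := by
  let g : ℕ → ℕ := fun t => max (t + 1) ((Finset.range (t + 1)).sup (R · t))
  have hg : ∀ t, g (g^[t] 0) = g^[t + 1] 0 := fun t => (Function.iterate_succ_apply' g t 0).symm
  refine ⟨fun t => g^[t] 0, strictMono_nat_of_lt_succ fun t => ?_, fun n t hn => ?_⟩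
  · exact (hg t).symm ▸ (Nat.lt_succ_self _).trans_le (le_max_left _ _)
  · show R n (g^[t] 0) ≤ g^[t + 1] 0
    rw [← hg]
    exact (Finset.le_sup (f := (R · _)) (Finset.mem_range_succ_iff.2 hn)).trans (le_max_right _ _)

lemma exists_gap_of_lt_enum {x : CantorSp} (hx : x ∈ CInf) {p : ℕ → ℕ} (hp : Monotone p) {j : ℕ}
    (hj : p (2 * j + 1) < enum x j) :
    ∃ t ∈ Finset.Icc j (2 * j), ∀ i ∈ Ioo (p t) (p (t + 1)), x i = false := by
  by_contra! h
  choose! c hcI hcx using h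
  have hmaps : ∀ t ∈ Finset.Icc j (2 * j),
      c t ∈ (Finset.range (enum x j)).filter fun i => x i = true := by
    intro t ht
    have : p (t + 1) ≤ p (2 * j + 1) := hp (by simp at ht; omega)
    simpa using ⟨by grind, Bool.not_eq_false _ ▸ hcx t ht⟩
  have hinj : Set.InjOn c (Finset.Icc j (2 * j)) := by
    intro t ht t' ht' hcc
    by_contra hne
    wlog hlt : t < t' generalizing t t'
    · exact this ht' ht hcc.symm (Ne.symm hne) (by omega)
    have := hp (show t + 1 ≤ t' by omega)
    grind
  have hcard := Finset.card_le_card_of_injOn c hmaps hinj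
  rw [← Nat.count_eq_card_filter_range, enum, Nat.count_nth_of_infinite hx, Nat.card_Icc] at hcard
  omega

lemma IsBScale.exists_eventually_lt {s : Ordinal → CantorSp} (hs : IsBScale s) (h : ℕ → ℕ) :
    ∃ δ < frb.ord, ∃ j : ℕ → ℕ, (∀ n, n ≤ j n) ∧
      ∀ α, δ ≤ α → α < frb.ord → ∀ᶠ n in atTop, h (j n) < enum (s α) (j n) := by
  obtain ⟨δ, hδ, hδh⟩ : ∃ δ < frb.ord, ¬ LeStar (enum (s δ)) h := by
    by_contra! H
    exact hs.2.1 ⟨h, by rintro _ ⟨α, hα, rfl⟩; exact H α hα⟩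
  have : ∀ n, ∃ m ≥ n, h m < enum (s δ) m := by
    simpa [LeStar, Filter.not_eventually, frequently_atTop] using hδh
  choose j hjn hj using this
  refine ⟨δ, hδ, j, hjn, fun α hδα hα => ?_⟩
  have hle : LeStar (enum (s δ)) (enum (s α)) := by
    rcases hδα.eq_or_lt with rfl | hlt
    · exact Eventually.of_forall fun _ => le_rfl
    · exact hs.2.2 δ α hlt hα
  filter_upwards [(tendsto_atTop_mono hjn tendsto_id).eventually hle] with n hn
  exact (hj n).trans_le hn

/-- For each `𝔟`-scale `S`, the subspace `S ∪ Fin` of the Cantor space is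
Hurewicz. -/
theorem stmt2 (s : Ordinal → CantorSp) (hs : IsBScale s) :
    Hurewicz ↥(rangeBelow s frb.ord ∪ CFin) := by
  have : Nonempty ↥(rangeBelow s frb.ord ∪ CFin) := ⟨⟨fun _ => false, Or.inr (by simp [CFin])⟩⟩
  refine hurewicz_of_forall_exists_bound fun W hW hWcov => ?_
  choose M R hMR using fun n =>
    exists_cover_bound_of_eq_false_on_Ioo subset_union_right (hW n) (hWcov n)
  obtain ⟨p, hp, hpR⟩ := exists_strictMono_forall_le R
  obtain ⟨δ, hδ, j, hjn, hδj⟩ := hs.exists_eventually_lt fun j => p (2 * j + 1)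
  obtain ⟨E, hE⟩ := exists_cover_bound_of_mk_lt_frb hWcov
    ((mk_preimage_of_injective _ _ Subtype.val_injective).trans_lt
      (mk_cfin_union_rangeBelow_lt_frb s hδ))
  let b n := max (E n) ((Finset.Icc (j n) (2 * j n)).sup fun t => M n (p t))
  refine ⟨b, fun x => ?_⟩
  have hsmall (hx : (x : CantorSp) ∈ CFin ∪ rangeBelow s δ) :
      ∀ᶠ n in atTop, ∃ k ≤ b n, x ∈ W n k :=
    (hE x hx).mono fun n ⟨k, hk, hxk⟩ => ⟨k, le_max_of_le_left hk, hxk⟩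
  obtain ⟨x, ⟨α, hα, rfl⟩ | hx⟩ := x
  · obtain hαδ | hδα := lt_or_ge α δ
    · exact hsmall (Or.inr ⟨α, hαδ, rfl⟩)
    filter_upwards [hδj α hδα hα] with n hn
    obtain ⟨t, ht, hgap⟩ := exists_gap_of_lt_enum (hs.1 α hα) hp.monotone hn
    have hnt : n ≤ p t := (hjn n).trans ((Finset.mem_Icc.1 ht).1.trans (hp.id_le t))
    obtain ⟨k, hk, hxk⟩ := hMR n (p t) ⟨s α, _⟩ fun i hi =>
      hgap i (Ioo_subset_Ioo_right (hpR n t hnt) hi)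
    exact ⟨k, le_max_of_le_right (hk.trans (Finset.le_sup (f := fun t => M n (p t)) ht)), hxk⟩
  · exact hsmall (Or.inl hx)
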